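/- arXiv:1912.03705 — 2 statements merged into one kernel-verified Lean document; each statement's English description precedes it below -/
import Mathlib

section
/- For all i and k with k+3 ≤ i ≤ 2k+2, the diagonal k-defective Ramsey number for split graphs satisfies R_k^SP(i,i) = 3i−2k−4. -/
open SimpleGraph

/-- A set `S` of vertices is `k`-sparse in `G` if every vertex of `S` has at most `k`
neighbors inside `S`. -/
def KSparse {V : Type*} (G : SimpleGraph V) (k : ℕ) (S : Set V) : Prop :=
  ∀ v ∈ S, ({u ∈ S | G.Adj v u}).ncard ≤ k

/-- A set is `k`-dense in `G` if it is `k`-sparse in the complement of `G`. -/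
def KDense {V : Type*} (G : SimpleGraph V) (k : ℕ) (S : Set V) : Prop :=
  KSparse Gᶜ k S

/-- `G` has a `k`-dense set of size `i`. -/
def HasKDense {V : Type*} (G : SimpleGraph V) (k i : ℕ) : Prop :=
  ∃ D : Set V, D.ncard = i ∧ KDense G k D

/-- `G` has a `k`-sparse set of size `j`. -/
def HasKSparse {V : Type*} (G : SimpleGraph V) (k j : ℕ) : Prop :=
  ∃ S : Set V, S.ncard = j ∧ KSparse G k S

/-- A cactus: every edge lies on at most one cycle, i.e. any two cycles sharing
an edge have the same edge set. -/
def IsCactus {V : Type*} (G : SimpleGraph V) : Prop :=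
  ∀ (u v : V) (c₁ : G.Walk u u) (c₂ : G.Walk v v), c₁.IsCycle → c₂.IsCycle →
    (∃ e, e ∈ c₁.edges ∧ e ∈ c₂.edges) → (∀ e, e ∈ c₁.edges ↔ e ∈ c₂.edges)

/-- A split graph: the vertices partition into a clique and an independent set. -/
def IsSplit {V : Type*} (G : SimpleGraph V) : Prop :=
  ∃ K : Set V, G.IsClique K ∧ Gᶜ.IsClique Kᶜ

/-- A cograph: no induced path on four vertices. -/
def IsCograph {V : Type*} (G : SimpleGraph V) : Prop :=
  ¬ ∃ f : Fin 4 ↪ V, ∀ a b : Fin 4, G.Adj (f a) (f b) ↔ (SimpleGraph.pathGraph 4).Adj a b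


private lemma ncard_Ico_fin (n lo hi : ℕ) (hhi : hi ≤ n) :
    ({u : Fin n | lo ≤ (u : ℕ) ∧ (u : ℕ) < hi}).ncard = hi - lo := by
  rcases le_or_gt lo hi with hlo | hlo
  · have himg : {u : Fin n | lo ≤ (u : ℕ) ∧ (u : ℕ) < hi}
        = (fun j : Fin (hi - lo) => (⟨lo + (j : ℕ), by have := j.isLt; omega⟩ : Fin n)) '' Set.univ := by
      ext u
      simp only [Set.mem_setOf_eq, Set.image_univ, Set.mem_range]
      constructor
      · rintro ⟨h1, h2⟩
        exact ⟨⟨(u : ℕ) - lo, by omega⟩, by ext; simp; omega⟩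
      · rintro ⟨j, rfl⟩
        have := j.isLt; simp; omega
    rw [himg, Set.ncard_image_of_injective _ ?_, Set.ncard_univ, Nat.card_eq_fintype_card,
      Fintype.card_fin]
    intro j₁ j₂ h
    have := congrArg Fin.val h
    simp only [Fin.val] at this
    exact Fin.ext (by omega)
  · have he : {u : Fin n | lo ≤ (u : ℕ) ∧ (u : ℕ) < hi} = ∅ := by
      ext u; simp only [Set.mem_setOf_eq, Set.mem_empty_iff_false, iff_false]; omega
    rw [he, Set.ncard_empty]; omega

private lemma ncard_val_lt_fin (n c : ℕ) (h : c ≤ n) :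
    ({u : Fin n | (u : ℕ) < c}).ncard = c := by
  have h2 : {u : Fin n | (u : ℕ) < c} = {u : Fin n | 0 ≤ (u : ℕ) ∧ (u : ℕ) < c} := by
    ext u; simp
  rw [h2, ncard_Ico_fin n 0 c h]; omega

private lemma part2 (k i : ℕ) (hi1 : k + 3 ≤ i) (hi2 : i ≤ 2 * k + 2) :
    ∃ G : SimpleGraph (Fin (3 * i - 2 * k - 5)),
      IsSplit G ∧ ¬ HasKDense G k i ∧ ¬ HasKSparse G k i := by
  classical
  set R : Fin (3 * i - 2 * k - 5) → Fin (3 * i - 2 * k - 5) → Prop := fun u v =>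
    ((u : ℕ) < i - 1 ∧ (v : ℕ) < i - 1) ∨
    ((u : ℕ) < i - k - 2 ∧ (i - 1 ≤ (v : ℕ) ∧ (v : ℕ) < i - 1 + (i - k - 2))) ∨
    ((i - k - 2 ≤ (u : ℕ) ∧ (u : ℕ) < 2 * (i - k - 2)) ∧ i - 1 + (i - k - 2) ≤ (v : ℕ))
    with hR
  refine ⟨SimpleGraph.fromRel R, ?_, ?_, ?_⟩
  · -- split
    refine ⟨{v | (v : ℕ) < i - 1}, ?_, ?_⟩
    · intro u hu v hv hne
      rw [SimpleGraph.fromRel_adj]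
      exact ⟨hne, Or.inl (Or.inl ⟨hu, hv⟩)⟩
    · intro u hu v hv hne
      rw [SimpleGraph.compl_adj]
      refine ⟨hne, fun hadj => ?_⟩
      rw [SimpleGraph.fromRel_adj] at hadj
      obtain ⟨-, h⟩ := hadj
      simp only [Set.mem_compl_iff, Set.mem_setOf_eq, not_lt] at hu hv
      rw [hR] at h
      omega
  · -- no k-dense i-set
    rintro ⟨X, hXc, hXd⟩
    have hXcl : ∀ v ∈ X, (v : ℕ) < i - 1 := by
      intro v hv
      by_contra hge
      push_neg at hge
      by_cases hD : (v : ℕ) < i - 1 + (i - k - 2)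
      · -- v ∈ D: nonneighbors in X are everything outside A ∪ {v}
        set Z : Set (Fin (3 * i - 2 * k - 5)) := {u | (u : ℕ) < i - k - 2} ∪ {v} with hZ
        have hsub : X \ Z ⊆ {u ∈ X | (SimpleGraph.fromRel R)ᶜ.Adj v u} := by
          rintro u ⟨huX, hu2⟩
          rw [hZ] at hu2
          simp only [Set.mem_union, Set.mem_setOf_eq, Set.mem_singleton_iff, not_or] at hu2
          refine ⟨huX, ?_⟩
          rw [SimpleGraph.compl_adj]
          refine ⟨fun h => hu2.2 h.symm, fun hadj => ?_⟩
          rw [SimpleGraph.fromRel_adj] at hadj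
          obtain ⟨-, h⟩ := hadj
          rw [hR] at h
          omega
        have h1 : ({u ∈ X | (SimpleGraph.fromRel R)ᶜ.Adj v u}).ncard ≤ k := hXd v hv
        have h2 : (X \ Z).ncard ≤ k := le_trans (Set.ncard_le_ncard hsub (Set.toFinite _)) h1
        have h3 : X.ncard ≤ (X \ Z).ncard + Z.ncard := by
          have hsub2 : X ⊆ (X \ Z) ∪ Z := by
            intro u hu
            by_cases h : u ∈ Z
            · exact Or.inr h
            · exact Or.inl ⟨hu, h⟩
          exact le_trans (Set.ncard_le_ncard hsub2 (Set.toFinite _)) (Set.ncard_union_le _ _)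
        have h4 : Z.ncard ≤ (i - k - 2) + 1 := by
          refine le_trans (Set.ncard_union_le _ _) ?_
          rw [ncard_val_lt_fin _ _ (by omega), Set.ncard_singleton]
        omega
      · -- v ∈ E
        push_neg at hD
        set Z : Set (Fin (3 * i - 2 * k - 5)) :=
          {u | i - k - 2 ≤ (u : ℕ) ∧ (u : ℕ) < 2 * (i - k - 2)} ∪ {v} with hZ
        have hsub : X \ Z ⊆ {u ∈ X | (SimpleGraph.fromRel R)ᶜ.Adj v u} := by
          rintro u ⟨huX, hu2⟩
          rw [hZ] at hu2
          simp only [Set.mem_union, Set.mem_setOf_eq, Set.mem_singleton_iff, not_or, not_and,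
            not_lt] at hu2
          refine ⟨huX, ?_⟩
          rw [SimpleGraph.compl_adj]
          refine ⟨fun h => hu2.2 h.symm, fun hadj => ?_⟩
          rw [SimpleGraph.fromRel_adj] at hadj
          obtain ⟨-, h⟩ := hadj
          rw [hR] at h
          have := hu2.1
          omega
        have h1 : ({u ∈ X | (SimpleGraph.fromRel R)ᶜ.Adj v u}).ncard ≤ k := hXd v hv
        have h2 : (X \ Z).ncard ≤ k := le_trans (Set.ncard_le_ncard hsub (Set.toFinite _)) h1
        have h3 : X.ncard ≤ (X \ Z).ncard + Z.ncard := by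
          have hsub2 : X ⊆ (X \ Z) ∪ Z := by
            intro u hu
            by_cases h : u ∈ Z
            · exact Or.inr h
            · exact Or.inl ⟨hu, h⟩
          exact le_trans (Set.ncard_le_ncard hsub2 (Set.toFinite _)) (Set.ncard_union_le _ _)
        have h4 : Z.ncard ≤ (i - k - 2) + 1 := by
          refine le_trans (Set.ncard_union_le _ _) ?_
          rw [ncard_Ico_fin _ _ _ (by omega), Set.ncard_singleton]
          omega
        omega
    have hXsub : X ⊆ {u : Fin (3 * i - 2 * k - 5) | (u : ℕ) < i - 1} := hXcl
    have := Set.ncard_le_ncard hXsub (Set.toFinite _)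
    rw [ncard_val_lt_fin _ _ (by omega)] at this
    omega
  · -- no k-sparse i-set
    rintro ⟨X, hXc, hXs⟩
    set XA := {u ∈ X | (u : ℕ) < i - k - 2} with hXA
    set XB := {u ∈ X | i - k - 2 ≤ (u : ℕ) ∧ (u : ℕ) < 2 * (i - k - 2)} with hXB
    set XC := {u ∈ X | 2 * (i - k - 2) ≤ (u : ℕ) ∧ (u : ℕ) < i - 1} with hXC
    set Xcl := {u ∈ X | (u : ℕ) < i - 1} with hXcl
    set XD := {u ∈ X | i - 1 ≤ (u : ℕ) ∧ (u : ℕ) < i - 1 + (i - k - 2)} with hXD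
    set XE := {u ∈ X | i - 1 + (i - k - 2) ≤ (u : ℕ)} with hXE
    -- partition identities
    have hpart1 : Xcl.ncard + XD.ncard + XE.ncard = i := by
      have hu : X = Xcl ∪ (XD ∪ XE) := by
        ext u
        simp only [hXcl, hXD, hXE, Set.mem_union, Set.mem_setOf_eq]
        constructor
        · intro h
          have hc : (u : ℕ) < i - 1 ∨ (i - 1 ≤ (u : ℕ) ∧ (u : ℕ) < i - 1 + (i - k - 2)) ∨
              i - 1 + (i - k - 2) ≤ (u : ℕ) := by omega
          tauto
        · rintro (⟨h, -⟩ | ⟨h, -⟩ | ⟨h, -⟩) <;> exact h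
      have hd1 : Disjoint Xcl (XD ∪ XE) := by
        rw [Set.disjoint_union_right]
        constructor <;> (rw [Set.disjoint_left]; rintro u ⟨-, h1⟩ ⟨-, h2⟩; omega)
      have hd2 : Disjoint XD XE := by
        rw [Set.disjoint_left]; rintro u ⟨-, h1⟩ ⟨-, h2⟩; omega
      rw [hu, Set.ncard_union_eq hd1, Set.ncard_union_eq hd2] at hXc
      omega
    have hpart2 : XA.ncard + XB.ncard + XC.ncard = Xcl.ncard := by
      have hu : Xcl = XA ∪ (XB ∪ XC) := by
        ext u
        simp only [hXcl, hXA, hXB, hXC, Set.mem_union, Set.mem_setOf_eq]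
        constructor
        · rintro ⟨h, hlt⟩
          have hc : (u : ℕ) < i - k - 2 ∨ (i - k - 2 ≤ (u : ℕ) ∧ (u : ℕ) < 2 * (i - k - 2)) ∨
              (2 * (i - k - 2) ≤ (u : ℕ) ∧ (u : ℕ) < i - 1) := by omega
          tauto
        · rintro (⟨h, h2⟩ | ⟨h, h2⟩ | ⟨h, h2⟩) <;> exact ⟨h, by omega⟩
      have hd1 : Disjoint XA (XB ∪ XC) := by
        rw [Set.disjoint_union_right]
        constructor <;> (rw [Set.disjoint_left]; rintro u ⟨-, h1⟩ ⟨-, h2⟩; omega)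
      have hd2 : Disjoint XB XC := by
        rw [Set.disjoint_left]; rintro u ⟨-, h1⟩ ⟨-, h2⟩; omega
      rw [hu, Set.ncard_union_eq hd1, Set.ncard_union_eq hd2]
      omega
    -- size bounds
    have hXDle : XD.ncard ≤ i - k - 2 := by
      have hsub : XD ⊆ {u : Fin (3 * i - 2 * k - 5) |
          i - 1 ≤ (u : ℕ) ∧ (u : ℕ) < i - 1 + (i - k - 2)} := fun u hu => hu.2
      have := Set.ncard_le_ncard hsub (Set.toFinite _)
      rw [ncard_Ico_fin _ _ _ (by omega)] at this
      omega
    have hXEle : XE.ncard ≤ i - k - 2 := by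
      have hsub : XE ⊆ {u : Fin (3 * i - 2 * k - 5) |
          i - 1 + (i - k - 2) ≤ (u : ℕ) ∧ (u : ℕ) < 3 * i - 2 * k - 5} := by
        rintro u ⟨-, h⟩
        exact ⟨h, u.isLt⟩
      have := Set.ncard_le_ncard hsub (Set.toFinite _)
      rw [ncard_Ico_fin _ _ _ (by omega)] at this
      omega
    have hXCle : XC.ncard ≤ 2 * k + 3 - i := by
      have hsub : XC ⊆ {u : Fin (3 * i - 2 * k - 5) |
          2 * (i - k - 2) ≤ (u : ℕ) ∧ (u : ℕ) < i - 1} := fun u hu => hu.2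
      have := Set.ncard_le_ncard hsub (Set.toFinite _)
      rw [ncard_Ico_fin _ _ _ (by omega)] at this
      omega
    -- neighbor bounds
    have hA : XA.Nonempty → Xcl.ncard + XD.ncard ≤ k + 1 := by
      rintro ⟨v, hvX, hvA⟩
      have hsub : (Xcl \ {v}) ∪ XD ⊆ {u ∈ X | (SimpleGraph.fromRel R).Adj v u} := by
        rintro u (⟨⟨huX, hucl⟩, huv⟩ | ⟨huX, huD⟩)
        · refine ⟨huX, ?_⟩
          rw [SimpleGraph.fromRel_adj]
          refine ⟨fun h => huv (by simp [h.symm]), Or.inl (Or.inl ⟨by omega, hucl⟩)⟩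
        · refine ⟨huX, ?_⟩
          rw [SimpleGraph.fromRel_adj]
          refine ⟨Fin.ne_of_val_ne (by omega), Or.inl (Or.inr (Or.inl ⟨hvA, huD⟩))⟩
      have h1 := hXs v hvX
      have h2 := le_trans (Set.ncard_le_ncard hsub (Set.toFinite _)) h1
      have hd : Disjoint (Xcl \ {v}) XD := by
        rw [Set.disjoint_left]; rintro u ⟨⟨-, h1'⟩, -⟩ ⟨-, h2'⟩; omega
      rw [Set.ncard_union_eq hd] at h2
      have h4 : (Xcl \ {v}).ncard = Xcl.ncard - 1 :=
        Set.ncard_diff_singleton_of_mem ⟨hvX, by omega⟩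
      have h5 : 0 < Xcl.ncard := (Set.ncard_pos (Set.toFinite _)).2 ⟨v, hvX, by omega⟩
      omega
    have hB : XB.Nonempty → Xcl.ncard + XE.ncard ≤ k + 1 := by
      rintro ⟨v, hvX, hvB⟩
      have hsub : (Xcl \ {v}) ∪ XE ⊆ {u ∈ X | (SimpleGraph.fromRel R).Adj v u} := by
        rintro u (⟨⟨huX, hucl⟩, huv⟩ | ⟨huX, huE⟩)
        · refine ⟨huX, ?_⟩
          rw [SimpleGraph.fromRel_adj]
          refine ⟨fun h => huv (by simp [h.symm]), Or.inl (Or.inl ⟨by omega, hucl⟩)⟩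
        · refine ⟨huX, ?_⟩
          rw [SimpleGraph.fromRel_adj]
          refine ⟨Fin.ne_of_val_ne (by omega), Or.inl (Or.inr (Or.inr ⟨hvB, huE⟩))⟩
      have h1 := hXs v hvX
      have h2 := le_trans (Set.ncard_le_ncard hsub (Set.toFinite _)) h1
      have hd : Disjoint (Xcl \ {v}) XE := by
        rw [Set.disjoint_left]; rintro u ⟨⟨-, h1'⟩, -⟩ ⟨-, h2'⟩; omega
      rw [Set.ncard_union_eq hd] at h2
      have h4 : (Xcl \ {v}).ncard = Xcl.ncard - 1 :=
        Set.ncard_diff_singleton_of_mem ⟨hvX, by omega⟩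
      have h5 : 0 < Xcl.ncard := (Set.ncard_pos (Set.toFinite _)).2 ⟨v, hvX, by omega⟩
      omega
    have dA : XA.ncard = 0 ∨ Xcl.ncard + XD.ncard ≤ k + 1 := by
      rcases XA.eq_empty_or_nonempty with h | h
      · left; rw [h, Set.ncard_empty]
      · right; exact hA h
    have dB : XB.ncard = 0 ∨ Xcl.ncard + XE.ncard ≤ k + 1 := by
      rcases XB.eq_empty_or_nonempty with h | h
      · left; rw [h, Set.ncard_empty]
      · right; exact hB h
    omega

private lemma ncard_sep_eq_filter' {α : Type*} {s : Set α} (hs : s.Finite) (p : α → Prop)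
    [DecidablePred p] : {x ∈ s | p x}.ncard = (hs.toFinset.filter p).card := by
  rw [Set.ncard_eq_toFinset_card _ (hs.subset (Set.sep_subset s p))]
  congr 1
  ext x
  simp

private lemma double_swap' {α β : Type*} (A : Finset α) (B : Finset β) (r : α → β → Prop)
    [∀ a b, Decidable (r a b)] :
    ∑ t ∈ A, (B.filter (fun s => r t s)).card = ∑ s ∈ B, (A.filter (fun t => r t s)).card := by
  simp only [Finset.card_filter]
  exact Finset.sum_comm

private lemma part1 (k i : ℕ) (hi1 : k + 3 ≤ i) (hi2 : i ≤ 2 * k + 2)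
    (G : SimpleGraph (Fin (3 * i - 2 * k - 4))) (hG : IsSplit G) :
    HasKDense G k i ∨ HasKSparse G k i := by
  classical
  obtain ⟨K, hK, hI⟩ := hG
  have hab : K.ncard + Kᶜ.ncard = 3 * i - 2 * k - 4 := by
    rw [Set.ncard_add_ncard_compl K]
    simp [Nat.card_eq_fintype_card]
  -- clique and independence facts
  have hclique : ∀ u ∈ K, ∀ v ∈ K, u ≠ v → G.Adj u v := fun u hu v hv hne => hK hu hv hne
  have hind : ∀ u ∈ Kᶜ, ∀ v ∈ Kᶜ, G.Adj u v → False := by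
    intro u hu v hv hadj
    have hne := G.ne_of_adj hadj
    have h2 := hI hu hv hne
    rw [SimpleGraph.compl_adj] at h2
    exact h2.2 hadj
  have denseOf : ∀ D ⊆ K, KDense G k D := by
    intro D hD v hv
    have he : {u ∈ D | Gᶜ.Adj v u} = ∅ := by
      ext u
      simp only [Set.mem_setOf_eq, Set.mem_empty_iff_false, iff_false, not_and]
      intro hu hadj
      rw [SimpleGraph.compl_adj] at hadj
      exact hadj.2 (hclique v (hD hv) u (hD hu) hadj.1)
    rw [he, Set.ncard_empty]
    exact Nat.zero_le k
  have sparseOf : ∀ S ⊆ Kᶜ, KSparse G k S := by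
    intro S hS v hv
    have he : {u ∈ S | G.Adj v u} = ∅ := by
      ext u
      simp only [Set.mem_setOf_eq, Set.mem_empty_iff_false, iff_false, not_and]
      intro hu hadj
      exact hind v (hS hv) u (hS hu) hadj
    rw [he, Set.ncard_empty]
    exact Nat.zero_le k
  by_cases hia : i ≤ K.ncard
  · obtain ⟨D, hDK, hDc⟩ := Set.exists_subset_card_eq hia
    exact Or.inl ⟨D, hDc, denseOf D hDK⟩
  by_cases hib : i ≤ Kᶜ.ncard
  · obtain ⟨S, hS, hSc⟩ := Set.exists_subset_card_eq hib
    exact Or.inr ⟨S, hSc, sparseOf S hS⟩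
  push_neg at hia hib
  set a := K.ncard with hadef
  set b := Kᶜ.ncard with hbdef
  set Igood : Set (Fin (3 * i - 2 * k - 4)) := {s | s ∈ Kᶜ ∧ ({u ∈ K | ¬ G.Adj s u}).ncard + i ≤ k + 1 + a}
    with hIgood
  set Kgood : Set (Fin (3 * i - 2 * k - 4)) := {t | t ∈ K ∧ ({u ∈ Kᶜ | G.Adj t u}).ncard + i ≤ k + 1 + b}
    with hKgood
  by_cases hDC : i ≤ Igood.ncard + a
  · -- build a dense set
    left
    obtain ⟨S, hSg, hSc⟩ := Set.exists_subset_card_eq (show i - a ≤ Igood.ncard by omega)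
    have hSI : S ⊆ Kᶜ := fun s hs => (hSg hs).1
    have hdisj : Disjoint K S := Set.disjoint_of_subset_right hSI disjoint_compl_right
    refine ⟨K ∪ S, ?_, ?_⟩
    · rw [Set.ncard_union_eq hdisj]
      omega
    · intro v hv
      rcases hv with hvK | hvS
      · have hsub : {u ∈ K ∪ S | Gᶜ.Adj v u} ⊆ S := by
          rintro u ⟨hu, hadj⟩
          rw [SimpleGraph.compl_adj] at hadj
          rcases hu with huK | huS
          · exact absurd (hclique v hvK u huK hadj.1) hadj.2
          · exact huS
        have := Set.ncard_le_ncard hsub (Set.toFinite _)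
        omega
      · obtain ⟨hvI, hvb⟩ := hSg hvS
        have hsub : {u ∈ K ∪ S | Gᶜ.Adj v u} ⊆ {u ∈ K | ¬ G.Adj v u} ∪ (S \ {v}) := by
          rintro u ⟨hu, hadj⟩
          rw [SimpleGraph.compl_adj] at hadj
          rcases hu with huK | huS
          · exact Or.inl ⟨huK, hadj.2⟩
          · exact Or.inr ⟨huS, fun h => hadj.1 (by simpa using h.symm)⟩
        have h1 := Set.ncard_le_ncard hsub (Set.toFinite _)
        have h2 := Set.ncard_union_le {u ∈ K | ¬ G.Adj v u} (S \ {v})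
        have h3 : (S \ {v}).ncard = S.ncard - 1 := Set.ncard_diff_singleton_of_mem hvS
        have h4 : 0 < S.ncard := (Set.ncard_pos (Set.toFinite _)).2 ⟨v, hvS⟩
        omega
  by_cases hSC : i ≤ Kgood.ncard + b
  · -- build a sparse set
    right
    obtain ⟨T, hTg, hTc⟩ := Set.exists_subset_card_eq (show i - b ≤ Kgood.ncard by omega)
    have hTK : T ⊆ K := fun t ht => (hTg ht).1
    have hdisj : Disjoint Kᶜ T := Set.disjoint_of_subset_right hTK disjoint_compl_left
    refine ⟨Kᶜ ∪ T, ?_, ?_⟩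
    · rw [Set.ncard_union_eq hdisj]
      omega
    · intro v hv
      rcases hv with hvI | hvT
      · have hsub : {u ∈ Kᶜ ∪ T | G.Adj v u} ⊆ T := by
          rintro u ⟨hu, hadj⟩
          rcases hu with huI | huT
          · exact absurd hadj (fun h => hind v hvI u huI h)
          · exact huT
        have := Set.ncard_le_ncard hsub (Set.toFinite _)
        omega
      · obtain ⟨hvK, hvb⟩ := hTg hvT
        have hsub : {u ∈ Kᶜ ∪ T | G.Adj v u} ⊆ {u ∈ Kᶜ | G.Adj v u} ∪ (T \ {v}) := by
          rintro u ⟨hu, hadj⟩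
          rcases hu with huI | huT
          · exact Or.inl ⟨huI, hadj⟩
          · exact Or.inr ⟨huT, fun h => G.ne_of_adj hadj (by simp at h; exact h.symm)⟩
        have h1 := Set.ncard_le_ncard hsub (Set.toFinite _)
        have h2 := Set.ncard_union_le {u ∈ Kᶜ | G.Adj v u} (T \ {v})
        have h3 : (T \ {v}).ncard = T.ncard - 1 := Set.ncard_diff_singleton_of_mem hvT
        have h4 : 0 < T.ncard := (Set.ncard_pos (Set.toFinite _)).2 ⟨v, hvT⟩
        omega
  -- counting case: contradiction
  exfalso
  push_neg at hDC hSC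
  set c := 2 * i - (2 * k + 3) with hc
  have hIgsub : Igood ⊆ Kᶜ := fun s hs => hs.1
  have hKgsub : Kgood ⊆ K := fun t ht => ht.1
  have hIbad : c ≤ (Kᶜ \ Igood).ncard := by
    rw [Set.ncard_diff hIgsub]
    have := Set.ncard_le_ncard hIgsub (Set.toFinite _)
    omega
  have hKbad : c ≤ (K \ Kgood).ncard := by
    rw [Set.ncard_diff hKgsub]
    have := Set.ncard_le_ncard hKgsub (Set.toFinite _)
    omega
  obtain ⟨I', hI'sub, hI'c⟩ := Set.exists_subset_card_eq hIbad
  obtain ⟨K', hK'sub, hK'c⟩ := Set.exists_subset_card_eq hKbad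
  have hI'K : I' ⊆ Kᶜ := fun s hs => (hI'sub hs).1
  have hK'K : K' ⊆ K := fun t ht => (hK'sub ht).1
  have hrow : ∀ t ∈ K', i ≤ ({s ∈ I' | G.Adj t s}).ncard + k + 1 := by
    intro t ht
    obtain ⟨htK, htb⟩ := hK'sub ht
    have hbad : k + 1 + b < ({u ∈ Kᶜ | G.Adj t u}).ncard + i := by
      by_contra hle
      push_neg at hle
      exact htb ⟨htK, hle⟩
    have hsub : {u ∈ Kᶜ | G.Adj t u} ⊆ {s ∈ I' | G.Adj t s} ∪ (Kᶜ \ I') := by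
      rintro u ⟨hu, hadj⟩
      by_cases h : u ∈ I'
      · exact Or.inl ⟨h, hadj⟩
      · exact Or.inr ⟨hu, h⟩
    have h1 := Set.ncard_le_ncard hsub (Set.toFinite _)
    have h2 := Set.ncard_union_le {s ∈ I' | G.Adj t s} (Kᶜ \ I')
    have h3 : (Kᶜ \ I').ncard = b - c := by rw [Set.ncard_diff hI'K, hI'c]
    have h4 : c ≤ b := hI'c ▸ Set.ncard_le_ncard hI'K (Set.toFinite _)
    omega
  have hcol : ∀ s ∈ I', i ≤ ({t ∈ K' | ¬ G.Adj t s}).ncard + k + 1 := by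
    intro s hs
    obtain ⟨hsI, hsb⟩ := hI'sub hs
    have hbad : k + 1 + a < ({u ∈ K | ¬ G.Adj s u}).ncard + i := by
      by_contra hle
      push_neg at hle
      exact hsb ⟨hsI, hle⟩
    have hsub : {u ∈ K | ¬ G.Adj s u} ⊆ {t ∈ K' | ¬ G.Adj t s} ∪ (K \ K') := by
      rintro u ⟨hu, hadj⟩
      by_cases h : u ∈ K'
      · exact Or.inl ⟨h, fun hadj2 => hadj hadj2.symm⟩
      · exact Or.inr ⟨hu, h⟩
    have h1 := Set.ncard_le_ncard hsub (Set.toFinite _)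
    have h2 := Set.ncard_union_le {t ∈ K' | ¬ G.Adj t s} (K \ K')
    have h3 : (K \ K').ncard = a - c := by rw [Set.ncard_diff hK'K, hK'c]
    have h4 : c ≤ a := hK'c ▸ Set.ncard_le_ncard hK'K (Set.toFinite _)
    omega
  -- now double count
  set IF := (Set.toFinite I').toFinset with hIF
  set KF := (Set.toFinite K').toFinset with hKF
  have hIFc : IF.card = c := by rw [← Set.ncard_eq_toFinset_card]; exact hI'c
  have hKFc : KF.card = c := by rw [← Set.ncard_eq_toFinset_card]; exact hK'c
  set d := i - (k + 1) with hd
  have hrow' : ∀ t ∈ KF, d ≤ (IF.filter (fun s => G.Adj t s)).card := by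
    intro t ht
    rw [Set.Finite.mem_toFinset] at ht
    have h := hrow t ht
    have he : ({s ∈ I' | G.Adj t s}).ncard = (IF.filter (fun s => G.Adj t s)).card :=
      ncard_sep_eq_filter' (Set.toFinite I') _
    omega
  have hcol' : ∀ s ∈ IF, d ≤ (KF.filter (fun t => ¬ G.Adj t s)).card := by
    intro s hs
    rw [Set.Finite.mem_toFinset] at hs
    have h := hcol s hs
    have he : ({t ∈ K' | ¬ G.Adj t s}).ncard = (KF.filter (fun t => ¬ G.Adj t s)).card :=
      ncard_sep_eq_filter' (Set.toFinite K') _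
    omega
  have hsum1 : KF.card * d ≤ ∑ t ∈ KF, (IF.filter (fun s => G.Adj t s)).card := by
    calc KF.card * d = KF.card • d := by simp
    _ ≤ _ := Finset.card_nsmul_le_sum KF _ d hrow'
  have hsum2 : IF.card * d ≤ ∑ s ∈ IF, (KF.filter (fun t => ¬ G.Adj t s)).card := by
    calc IF.card * d = IF.card • d := by simp
    _ ≤ _ := Finset.card_nsmul_le_sum IF _ d hcol'
  have hswap : ∑ s ∈ IF, (KF.filter (fun t => ¬ G.Adj t s)).card
      = ∑ t ∈ KF, (IF.filter (fun s => ¬ G.Adj t s)).card :=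
    (double_swap' KF IF (fun t s => ¬ G.Adj t s)).symm
  have htotal : ∑ t ∈ KF, ((IF.filter (fun s => G.Adj t s)).card
      + (IF.filter (fun s => ¬ G.Adj t s)).card) = c * c := by
    have : ∀ t ∈ KF, (IF.filter (fun s => G.Adj t s)).card
        + (IF.filter (fun s => ¬ G.Adj t s)).card = c := by
      intro t _
      rw [Finset.card_filter_add_card_filter_not]
      exact hIFc
    rw [Finset.sum_congr rfl this, Finset.sum_const, hKFc, smul_eq_mul]
  rw [Finset.sum_add_distrib] at htotal
  have hfin : c * d + c * d ≤ c * c := by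
    calc c * d + c * d = KF.card * d + IF.card * d := by rw [hKFc, hIFc]
    _ ≤ _ + _ := Nat.add_le_add hsum1 (hswap ▸ hsum2)
    _ = c * c := htotal
  have hcd : c < d + d := by omega
  have hc0 : 0 < c := by omega
  have : c * (d + d) ≤ c * c := by
    calc c * (d + d) = c * d + c * d := by ring
    _ ≤ c * c := hfin
  have := Nat.le_of_mul_le_mul_left this hc0
  omega

theorem stmt18 (k i : ℕ) (hi1 : k + 3 ≤ i) (hi2 : i ≤ 2 * k + 2) :
    (∀ G : SimpleGraph (Fin (3 * i - 2 * k - 4)), IsSplit G →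
        HasKDense G k i ∨ HasKSparse G k i) ∧
    (∃ G : SimpleGraph (Fin (3 * i - 2 * k - 5)),
        IsSplit G ∧ ¬ HasKDense G k i ∧ ¬ HasKSparse G k i) := by
  exact ⟨fun G hG => part1 k i hi1 hi2 G hG, part2 k i hi1 hi2⟩
end

section
/- Let i, j ≥ k+2. Then the k-defective Ramsey number for cographs equals 1 + ((i−1)(j−1) − {i−1}{j−1})/(k+1), where {x} denotes x mod (k+1). -/
open SimpleGraph

/-!
Upper bound. By Seinsche's theorem a cograph with at least two vertices is disconnected or has a
disconnected complement; since `k`-dense sets of `G` are the `k`-sparse sets of `Gᶜ` and the bound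
is symmetric in `i` and `j`, we may assume `V = A ⊔ B` with no edges between `A` and `B`.
Writing `i - 1 = a (k + 1) + r`, we have
`R_k^CO(i, j) - 1 = M(j) = a (j - 1) + r ⌊(j - 1) / (k + 1)⌋`, which is superadditive in `j - 1`.
Hence `j = j₁ + j₂` with `M(j₁) < |A|` and `M(j₂) < |B|`; by induction (or trivially when `j₁` or
`j₂` is at most `k + 1`) we find `k`-sparse sets of sizes `j₁` in `A` and `j₂` in `B` unless there
is a `k`-dense `i`-set, and their union is `k`-sparse.

Lower bound. An explicit cograph, built from cliques and independent sets by disjoint unions and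
complements, for which the largest `c`-sparse and `c`-dense sets are controlled for every
`c ≤ k` at once: a `c`-dense set meeting both parts of a disjoint union of `X` and `Y` in `x` and
`y` vertices is `(c - y)`-dense on the `X` side and `(c - x)`-dense on the `Y` side.
-/

section Sparse

variable {V W : Type*} {G : SimpleGraph V} {H : SimpleGraph W} {c : ℕ} {S T : Set V}

lemma KSparse.image (f : G ↪g H) (h : KSparse G c S) : KSparse H c (f '' S) := by
  rintro _ ⟨v, hv, rfl⟩
  have : {w ∈ f '' S | H.Adj (f v) w} = f '' {u ∈ S | G.Adj v u} := by
    ext w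
    constructor
    · rintro ⟨⟨u, hu, rfl⟩, huv⟩
      exact ⟨u, ⟨hu, f.map_adj_iff.1 huv⟩, rfl⟩
    · rintro ⟨u, ⟨hu, huv⟩, rfl⟩
      exact ⟨⟨u, hu, rfl⟩, f.map_adj_iff.2 huv⟩
  rw [this, Set.ncard_image_of_injective _ f.injective]
  exact h v hv

lemma KSparse.comap [Finite W] (f : G ↪g H) {S : Set W} (h : KSparse H c S) :
    KSparse G c (f ⁻¹' S) := by
  intro v hv
  calc {u ∈ f ⁻¹' S | G.Adj v u}.ncard = (f '' {u ∈ f ⁻¹' S | G.Adj v u}).ncard :=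
        (Set.ncard_image_of_injective _ f.injective).symm
    _ ≤ {w ∈ S | H.Adj (f v) w}.ncard :=
        Set.ncard_le_ncard fun _ ⟨u, ⟨hu, huv⟩, hw⟩ => hw ▸ ⟨hu, f.map_adj_iff.2 huv⟩
    _ ≤ c := h _ hv

lemma KSparse.union (hS : KSparse G c S) (hT : KSparse G c T)
    (hST : ∀ a ∈ S, ∀ b ∈ T, ¬ G.Adj a b) : KSparse G c (S ∪ T) := by
  rintro v (hv | hv)
  · have : {u ∈ S ∪ T | G.Adj v u} = {u ∈ S | G.Adj v u} := by
      ext u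
      exact ⟨fun ⟨hu, huv⟩ => ⟨hu.resolve_right fun hu => hST v hv u hu huv, huv⟩,
        fun ⟨hu, huv⟩ => ⟨Or.inl hu, huv⟩⟩
    rw [this]
    exact hS v hv
  · have : {u ∈ S ∪ T | G.Adj v u} = {u ∈ T | G.Adj v u} := by
      ext u
      exact ⟨fun ⟨hu, huv⟩ => ⟨hu.resolve_left fun hu => hST u hu v hv huv.symm, huv⟩,
        fun ⟨hu, huv⟩ => ⟨Or.inr hu, huv⟩⟩
    rw [this]
    exact hT v hv

lemma KSparse.of_ncard_le [Finite V] (hS : S.ncard ≤ c + 1) : KSparse G c S := by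
  intro v hv
  have := Set.ncard_le_ncard (s := {u ∈ S | G.Adj v u}) (t := S \ {v})
    fun u hu => ⟨hu.1, (G.ne_of_adj hu.2).symm⟩
  rw [Set.ncard_sdiff_singleton_of_mem hv] at this
  omega

lemma HasKSparse.map (f : G ↪g H) {j : ℕ} (h : HasKSparse G c j) : HasKSparse H c j :=
  let ⟨S, hS, hsp⟩ := h
  ⟨f '' S, (Set.ncard_image_of_injective _ f.injective).trans hS, hsp.image f⟩

lemma HasKDense.map (f : G ↪g H) {i : ℕ} (h : HasKDense G c i) : HasKDense H c i :=
  HasKSparse.map (Embedding.complEquiv f) h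

lemma hasKDense_compl {j : ℕ} : HasKDense Gᶜ c j ↔ HasKSparse G c j := by
  simp only [HasKDense, KDense, compl_compl, HasKSparse]

end Sparse

section Cograph

variable {U V W : Type*} {G : SimpleGraph V} {H : SimpleGraph W}

lemma isCograph_iff : IsCograph G ↔ ¬ pathGraph 4 ⊴ G :=
  ⟨fun h ⟨f⟩ => h ⟨f.toEmbedding, fun _ _ => f.map_adj_iff⟩,
    fun h ⟨f, hf⟩ => h ⟨⟨f, hf _ _⟩⟩⟩

lemma IsCograph.anti (hG : IsCograph G) (h : H ⊴ G) : IsCograph H := by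
  rw [isCograph_iff] at hG ⊢
  exact fun hH => hG (hH.trans h)

def pathGraphFourComplIso : (pathGraph 4)ᶜ ≃g pathGraph 4 where
  toEquiv := ⟨![1, 3, 0, 2], ![2, 0, 3, 1], by decide, by decide⟩
  map_rel_iff' := by
    intro a b
    simp only [compl_adj, pathGraph_adj]
    revert a b
    decide

lemma IsCograph.compl (hG : IsCograph G) : IsCograph Gᶜ := by
  rw [isCograph_iff] at hG ⊢
  intro h
  have h' := compl_isIndContained_compl.2 h
  rw [compl_compl] at h'
  exact hG (pathGraphFourComplIso.symm.isIndContained.trans h')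

lemma isCograph_bot : IsCograph (⊥ : SimpleGraph V) :=
  isCograph_iff.2 fun ⟨f⟩ => f.map_adj_iff.2 (pathGraph_adj.2 (by decide) : (pathGraph 4).Adj 0 1)

lemma isCograph_top : IsCograph (⊤ : SimpleGraph V) := by
  simpa using (isCograph_bot (V := V)).compl

lemma isIndContained_left_of_embedding_sum {F : SimpleGraph U} (hF : F.Preconnected)
    (f : F ↪g G ⊕g H) {u : U} {a : V} (hu : f u = .inl a) : F ⊴ G := by
  have hleft : ∀ t, ∃ b, f t = .inl b := by
    intro t
    have hreach := (hF u t).map f.toHom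
    rcases hft : f t with b | b
    · exact ⟨b, rfl⟩
    · simp only [RelEmbedding.coe_toRelHom, hu, hft] at hreach
      exact absurd hreach (not_reachable_sum_inl_inr _ _)
  choose g hg using hleft
  exact ⟨⟨⟨g, fun s t hst => f.injective (by rw [hg, hg, hst])⟩,
    fun {s t} => by rw [← f.map_adj_iff, hg, hg]; exact sum_adj_inl.symm⟩⟩

lemma isIndContained_or_of_isIndContained_sum {F : SimpleGraph U} (hF : F.Preconnected)
    (h : F ⊴ G ⊕g H) : F ⊴ G ∨ F ⊴ H := by
  obtain ⟨f⟩ := h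
  cases isEmpty_or_nonempty U with
  | inl => exact .inl .of_isEmpty
  | inr hU =>
    obtain ⟨u⟩ := hU
    rcases hu : f u with a | b
    · exact .inl (isIndContained_left_of_embedding_sum hF f hu)
    · exact .inr (isIndContained_left_of_embedding_sum hF (Iso.sumComm.toEmbedding.comp f)
        (u := u) (a := b) (by simp [hu]))

lemma IsCograph.sum (hG : IsCograph G) (hH : IsCograph H) : IsCograph (G ⊕g H) := by
  rw [isCograph_iff] at *
  intro h
  rcases isIndContained_or_of_isIndContained_sum (pathGraph_preconnected 4) h with h | h
  exacts [hG h, hH h]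

end Cograph

section Seinsche

variable {V : Type*} {G : SimpleGraph V}

lemma pathGraph_four_isIndContained {a b c d : V} (hab : G.Adj a b) (hbc : G.Adj b c)
    (hcd : G.Adj c d) (hac : ¬ G.Adj a c) (hbd : ¬ G.Adj b d) (had : ¬ G.Adj a d)
    (hac' : a ≠ c) (hbd' : b ≠ d) (had' : a ≠ d) : pathGraph 4 ⊴ G := by
  have hab' := hab.ne
  have hbc' := hbc.ne
  have hcd' := hcd.ne
  refine ⟨⟨⟨![a, b, c, d], fun s t hst => ?_⟩, fun {s t} => ?_⟩⟩
  · fin_cases s <;> fin_cases t <;> simp_all [eq_comm]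
  · show G.Adj (![a, b, c, d] s) (![a, b, c, d] t) ↔ _
    fin_cases s <;> fin_cases t <;> simp [pathGraph_adj, G.adj_comm b a, G.adj_comm c a,
      G.adj_comm c b, G.adj_comm d a, G.adj_comm d b, G.adj_comm d c, *]

lemma SimpleGraph.Reachable.exists_boundary_adj {P : V → Prop} {a b : V} (h : G.Reachable a b)
    (ha : P a) (hb : ¬ P b) : ∃ c d, G.Reachable a c ∧ G.Adj c d ∧ P c ∧ ¬ P d := by
  obtain ⟨p⟩ := h
  obtain ⟨d, -, ⟨hreach, hP⟩, hd⟩ :=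
    p.exists_boundary_dart {x | G.Reachable a x ∧ P x} ⟨.rfl, ha⟩ fun h => hb h.2
  exact ⟨d.fst, d.snd, hreach, d.adj, hP, fun h => hd ⟨hreach.trans d.adj.reachable, h⟩⟩

lemma SimpleGraph.compl_induce (s : Set V) : (G.induce s)ᶜ = Gᶜ.induce s := by
  ext a b
  simp [Subtype.ext_iff]

/-- The induced `P₄` is `p q v w`: `q` is the first neighbour of `v` on a path in `G - v` starting
at a non-neighbour `b` of `v`, and `w` is a neighbour of `v` in a component of `G - v` avoiding
`b`. -/
lemma pathGraph_four_isIndContained_of_not_preconnected_induce (hG : G.Preconnected)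
    (hGc : Gᶜ.Preconnected) {v : V} (hv : ¬ (G.induce {v}ᶜ).Preconnected) :
    pathGraph 4 ⊴ G := by
  set H := G.induce {v}ᶜ
  have exists_nbr : ∀ z : ({v}ᶜ : Set V), ∃ a : ({v}ᶜ : Set V), H.Reachable z a ∧ G.Adj v a := by
    intro z
    obtain ⟨c, d, -, hcd, ⟨hc, hzc⟩, hd⟩ := (hG z v).exists_boundary_adj
      (P := fun u => ∃ h : u ∈ ({v}ᶜ : Set V), H.Reachable z ⟨u, h⟩) ⟨z.2, .rfl⟩ fun ⟨h, _⟩ => h rfl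
    by_cases hdv : d = v
    · exact ⟨⟨c, hc⟩, hzc, hdv ▸ hcd.symm⟩
    · exact absurd ⟨hdv, hzc.trans (Adj.reachable (G := H) (u := ⟨c, hc⟩) (v := ⟨d, hdv⟩) hcd)⟩ hd
  obtain ⟨x, y, hxy⟩ : ∃ x y, ¬ H.Reachable x y := by simpa [Preconnected] using hv
  have : Nontrivial V := ⟨⟨x, v, x.2⟩⟩
  obtain ⟨b, hvb⟩ := hGc.exists_adj_of_nontrivial v
  obtain ⟨a, hba, hva⟩ := exists_nbr ⟨b, hvb.ne.symm⟩
  obtain ⟨p, q, hbp, hpq, hvp, hvq⟩ :=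
    hba.exists_boundary_adj (P := fun u : ({v}ᶜ : Set V) => ¬ G.Adj v u) hvb.2 (not_not.2 hva)
  obtain ⟨w, hvw, hbw⟩ : ∃ w : ({v}ᶜ : Set V), G.Adj v w ∧ ¬ H.Reachable ⟨b, hvb.ne.symm⟩ w := by
    obtain ⟨ax, hxax, hvax⟩ := exists_nbr x
    obtain ⟨ay, hyay, hvay⟩ := exists_nbr y
    by_contra! h
    exact hxy (hxax.trans ((h ax hvax).symm.trans ((h ay hvay).trans hyay.symm)))
  have hbq := hbp.trans hpq.reachable
  exact pathGraph_four_isIndContained hpq (not_not.1 hvq).symm hvw (fun h => hvp h.symm)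
    (fun h => hbw (hbq.trans (Adj.reachable (G := H) h)))
    (fun h => hbw (hbp.trans (Adj.reachable (G := H) h))) p.2
    (fun h => hbw (Subtype.ext h ▸ hbq)) (fun h => hbw (Subtype.ext h ▸ hbp))

theorem IsCograph.not_preconnected_or_not_preconnected_compl [Finite V] [Nontrivial V]
    (hG : IsCograph G) : ¬ G.Preconnected ∨ ¬ Gᶜ.Preconnected := by
  induction hn : Nat.card V using Nat.strong_induction_on generalizing V with
  | _ n ih =>
  by_contra! h
  obtain ⟨v, hv⟩ := (Connected.mk h.1).exists_connected_induce_compl_singleton_of_finite_nontrivial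
  cases subsingleton_or_nontrivial ({v}ᶜ : Set V) with
  | inl _ =>
    obtain ⟨a, hva⟩ := h.1.exists_adj_of_nontrivial v
    obtain ⟨b, hvb⟩ := h.2.exists_adj_of_nontrivial v
    have hab : a = b :=
      congrArg Subtype.val (Subsingleton.elim (⟨a, hva.ne.symm⟩ : ({v}ᶜ : Set V)) ⟨b, hvb.ne.symm⟩)
    exact hvb.2 (hab ▸ hva)
  | inr _ =>
    have hcard : Nat.card ({v}ᶜ : Set V) < n := hn ▸ Finite.card_subtype_lt (x := v) (by simp)
    rcases ih _ hcard (hG.anti (Embedding.induce _).isIndContained) rfl with h' | h'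
    · exact h' hv.preconnected
    · rw [compl_induce] at h'
      exact isCograph_iff.1 hG.compl
        (pathGraph_four_isIndContained_of_not_preconnected_induce h.2 (by simpa using h.1) h')

end Seinsche

section Arithmetic

lemma Nat.mul_sub_mod_mul_mod_div {m n D : ℕ} (hD : 0 < D) :
    (m * n - m % D * (n % D)) / D = m / D * n + m % D * (n / D) := by
  have hm := Nat.div_add_mod m D
  have hn := Nat.div_add_mod n D
  have h : m * n = D * (m / D * n + m % D * (n / D)) + m % D * (n % D) := by
    generalize m / D = a, m % D = r, n / D = b, n % D = s at *
    subst hm hn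
    ring
  rw [h, Nat.add_sub_cancel, Nat.mul_div_cancel_left _ hD]

/-- `R_k^CO(i, j) - 1`. -/
def extremalOrder (k i j : ℕ) : ℕ :=
  ((i - 1) * (j - 1) - (i - 1) % (k + 1) * ((j - 1) % (k + 1))) / (k + 1)

lemma extremalOrder_comm (k i j : ℕ) : extremalOrder k i j = extremalOrder k j i := by
  rw [extremalOrder, extremalOrder, mul_comm (i - 1), mul_comm ((i - 1) % _)]

lemma extremalOrder_eq (k i j : ℕ) :
    extremalOrder k i j = (i - 1) / (k + 1) * (j - 1) + (i - 1) % (k + 1) * ((j - 1) / (k + 1)) :=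
  Nat.mul_sub_mod_mul_mod_div k.succ_pos

lemma extremalOrder_add_le (k i s t : ℕ) :
    extremalOrder k i (s + 1) + extremalOrder k i (t + 1) ≤ extremalOrder k i (s + t + 1) := by
  simp only [extremalOrder_eq, Nat.add_sub_cancel]
  have := Nat.mul_le_mul_left ((i - 1) % (k + 1))
    (Nat.div_add_div_le_add_div (x := s) (y := t) (z := k + 1))
  rw [mul_add] at this
  nlinarith

lemma sub_one_le_extremalOrder {k i : ℕ} (hi : k + 2 ≤ i) (j : ℕ) :
    j - 1 ≤ extremalOrder k i j := by
  rw [extremalOrder_eq]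
  have : 1 ≤ (i - 1) / (k + 1) := (Nat.le_div_iff_mul_le k.succ_pos).2 (by omega)
  exact (Nat.le_mul_of_pos_left _ this).trans (Nat.le_add_right _ _)

lemma exists_add_eq_of_superadditive {g : ℕ → ℕ} (hg : ∀ s t, g s + g t ≤ g (s + t))
    {t x y : ℕ} (ht : 0 < t) (hx : 0 < x) (hy : 0 < y) (hxy : g t < x + y) :
    ∃ t₁ t₂, t₁ + t₂ + 1 = t ∧ g t₁ < x ∧ g t₂ < y := by
  have hg0 : g 0 = 0 := by simpa using hg 0 0
  by_cases h : g (t - 1) < x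
  · exact ⟨t - 1, 0, by omega, h, by rwa [hg0]⟩
  have hex : ∃ u, x ≤ g u := ⟨t - 1, by omega⟩
  have hu0 : Nat.find hex ≠ 0 := fun h0 => by
    have := Nat.find_spec hex
    rw [h0] at this
    omega
  have hut : Nat.find hex ≤ t - 1 := Nat.find_min' hex (by omega)
  refine ⟨Nat.find hex - 1, t - Nat.find hex, by omega,
    not_le.1 (Nat.find_min hex (by omega)), ?_⟩
  have := hg (Nat.find hex) (t - Nat.find hex)
  rw [Nat.add_sub_cancel' (by omega)] at this
  have := Nat.find_spec hex
  omega

end Arithmetic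

section UpperBound

variable {V : Type*} [Finite V] {G : SimpleGraph V} {k i : ℕ}

lemma hasKDense_or_exists_kSparse_subset (hi : k + 2 ≤ i) {W : Set V}
    (ih : ∀ j, k + 2 ≤ j → extremalOrder k i j < W.ncard →
      HasKDense (G.induce W) k i ∨ HasKSparse (G.induce W) k j)
    {j : ℕ} (hj : extremalOrder k i j < W.ncard) :
    HasKDense G k i ∨ ∃ S ⊆ W, S.ncard = j ∧ KSparse G k S := by
  by_cases hjk : j ≤ k + 1
  · have := sub_one_le_extremalOrder hi j
    obtain ⟨S, hSW, hS⟩ := Set.exists_subset_card_eq (show j ≤ W.ncard by omega)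
    exact .inr ⟨S, hSW, hS, KSparse.of_ncard_le (by omega)⟩
  rcases ih j (by omega) hj with h | ⟨S, hS, hsp⟩
  · exact .inl (h.map (Embedding.induce W))
  · refine .inr ⟨_, ?_, (Set.ncard_image_of_injective _ (Embedding.induce W).injective).trans hS,
      hsp.image (Embedding.induce W)⟩
    rintro _ ⟨x, -, rfl⟩
    exact x.2

lemma hasKDense_or_hasKSparse_of_not_preconnected (hG : ¬ G.Preconnected) (hi : k + 2 ≤ i)
    {j : ℕ} (hj : k + 2 ≤ j) (hn : extremalOrder k i j < Nat.card V)
    (ih : ∀ W : Set V, W.ncard < Nat.card V → ∀ j, k + 2 ≤ j → extremalOrder k i j < W.ncard →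
      HasKDense (G.induce W) k i ∨ HasKSparse (G.induce W) k j) :
    HasKDense G k i ∨ HasKSparse G k j := by
  obtain ⟨x, y, hxy⟩ : ∃ x y, ¬ G.Reachable x y := by simpa [Preconnected] using hG
  set A := {z | G.Reachable x z}
  have hA : 0 < A.ncard := (Set.ncard_pos (Set.toFinite _)).2 ⟨x, .rfl⟩
  have hAc : 0 < Aᶜ.ncard := (Set.ncard_pos (Set.toFinite _)).2 ⟨y, hxy⟩
  have hsum := Set.ncard_add_ncard_compl A
  obtain ⟨t₁, t₂, ht, h₁, h₂⟩ := exists_add_eq_of_superadditive (extremalOrder_add_le k i)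
    (t := j - 1) (by omega) hA hAc (by rwa [Nat.sub_add_cancel (by omega), hsum])
  rcases hasKDense_or_exists_kSparse_subset hi (ih A (by omega)) h₁ with h | ⟨S, hSA, hS, hSsp⟩
  · exact .inl h
  rcases hasKDense_or_exists_kSparse_subset hi (ih Aᶜ (by omega)) h₂ with h | ⟨T, hTA, hT, hTsp⟩
  · exact .inl h
  refine .inr ⟨S ∪ T, ?_,
    hSsp.union hTsp fun a ha b hb hab => hTA hb ((hSA ha).trans hab.reachable)⟩
  rw [Set.ncard_union_eq (disjoint_compl_right.mono hSA hTA), hS, hT]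
  omega

theorem IsCograph.hasKDense_or_hasKSparse (hG : IsCograph G) (hi : k + 2 ≤ i) {j : ℕ}
    (hj : k + 2 ≤ j) (hn : extremalOrder k i j < Nat.card V) :
    HasKDense G k i ∨ HasKSparse G k j := by
  induction hc : Nat.card V using Nat.strong_induction_on generalizing V G i j with
  | _ n ih =>
  have : Nontrivial V := Finite.one_lt_card_iff_nontrivial.1 (by
    have := sub_one_le_extremalOrder hi j
    omega)
  have ih_induce : ∀ {G' : SimpleGraph V} {i'}, IsCograph G' → k + 2 ≤ i' →
      ∀ W : Set V, W.ncard < Nat.card V → ∀ j', k + 2 ≤ j' → extremalOrder k i' j' < W.ncard →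
      HasKDense (G'.induce W) k i' ∨ HasKSparse (G'.induce W) k j' := by
    intro G' i' hG' hi' W hW j' hj' h
    rw [← Nat.card_coe_set_eq] at hW h
    exact ih _ (hc ▸ hW) (hG'.anti (Embedding.induce W).isIndContained) hi' hj' h rfl
  rcases hG.not_preconnected_or_not_preconnected_compl with h | h
  · exact hasKDense_or_hasKSparse_of_not_preconnected h hi hj hn (ih_induce hG hi)
  · rw [extremalOrder_comm] at hn
    exact (hasKDense_or_hasKSparse_of_not_preconnected h hj hi hn (ih_induce hG.compl hj)).imp
      hasKDense_compl.1 id |>.symm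

end UpperBound

section SparseBound

variable {V W : Type*} {G : SimpleGraph V} {H : SimpleGraph W} {k c : ℕ} {f g : ℕ → ℕ}

def SparseBound (G : SimpleGraph V) (k : ℕ) (f : ℕ → ℕ) : Prop :=
  ∀ c ≤ k, ∀ S : Set V, KSparse G c S → S.ncard ≤ f c

lemma SparseBound.mono (h : SparseBound G k f) (hfg : ∀ c ≤ k, f c ≤ g c) : SparseBound G k g :=
  fun c hc S hS => (h c hc S hS).trans (hfg c hc)

lemma sparseBound_top (k : ℕ) : SparseBound (⊤ : SimpleGraph V) k fun c => c + 1 := by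
  intro c _ S hS
  show S.ncard ≤ c + 1
  obtain rfl | ⟨v, hv⟩ := S.eq_empty_or_nonempty
  · simp
  have hnbr : {u ∈ S | (⊤ : SimpleGraph V).Adj v u} = S \ {v} := by
    ext u
    simp [and_comm, eq_comm]
  have := hS v hv
  rw [hnbr, Set.ncard_sdiff_singleton_of_mem hv] at this
  omega

variable [Finite V] [Finite W]

lemma sparseBound_card (G : SimpleGraph V) (k : ℕ) : SparseBound G k fun _ => Nat.card V :=
  fun _ _ S _ => Set.ncard_le_card S

lemma Set.ncard_preimage_inl_add_ncard_preimage_inr (S : Set (V ⊕ W)) :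
    (Sum.inl ⁻¹' S).ncard + (Sum.inr ⁻¹' S).ncard = S.ncard := by
  conv_rhs => rw [← Set.image_preimage_inl_union_image_preimage_inr S]
  rw [Set.ncard_union_eq Set.disjoint_image_inl_image_inr,
    Set.ncard_image_of_injective _ Sum.inl_injective,
    Set.ncard_image_of_injective _ Sum.inr_injective]

lemma SparseBound.sum (hG : SparseBound G k f) (hH : SparseBound H k g) :
    SparseBound (G ⊕g H) k fun c => f c + g c := by
  intro c hc S hS
  rw [← Set.ncard_preimage_inl_add_ncard_preimage_inr]
  exact add_le_add (hG c hc _ (hS.comap Embedding.sumInl)) (hH c hc _ (hS.comap Embedding.sumInr))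

lemma KSparse.ncard_add_ncard_le_of_inl {S : Set (V ⊕ W)} (h : KSparse (G ⊕g H)ᶜ c S) {a : V}
    (ha : Sum.inl a ∈ S) :
    {x ∈ Sum.inl ⁻¹' S | Gᶜ.Adj a x}.ncard + (Sum.inr ⁻¹' S).ncard ≤ c := by
  calc _ = (Sum.inl '' {x ∈ Sum.inl ⁻¹' S | Gᶜ.Adj a x} ∪ Sum.inr '' (Sum.inr ⁻¹' S)).ncard := by
        rw [Set.ncard_union_eq Set.disjoint_image_inl_image_inr,
          Set.ncard_image_of_injective _ Sum.inl_injective,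
          Set.ncard_image_of_injective _ Sum.inr_injective]
    _ ≤ {u ∈ S | (G ⊕g H)ᶜ.Adj (Sum.inl a) u}.ncard :=
        Set.ncard_le_ncard (by rintro _ (⟨x, ⟨hx, hax⟩, rfl⟩ | ⟨y, hy, rfl⟩) <;> simp_all)
    _ ≤ c := h _ ha

lemma KSparse.ncard_add_ncard_le_of_inr {S : Set (V ⊕ W)} (h : KSparse (G ⊕g H)ᶜ c S) {b : W}
    (hb : Sum.inr b ∈ S) :
    {y ∈ Sum.inr ⁻¹' S | Hᶜ.Adj b y}.ncard + (Sum.inl ⁻¹' S).ncard ≤ c := by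
  calc _ = (Sum.inr '' {y ∈ Sum.inr ⁻¹' S | Hᶜ.Adj b y} ∪ Sum.inl '' (Sum.inl ⁻¹' S)).ncard := by
        rw [Set.ncard_union_eq Set.disjoint_image_inl_image_inr.symm,
          Set.ncard_image_of_injective _ Sum.inl_injective,
          Set.ncard_image_of_injective _ Sum.inr_injective]
    _ ≤ {u ∈ S | (G ⊕g H)ᶜ.Adj (Sum.inr b) u}.ncard :=
        Set.ncard_le_ncard (by rintro _ (⟨y, ⟨hy, hby⟩, rfl⟩ | ⟨x, hx, rfl⟩) <;> simp_all)
    _ ≤ c := h _ hb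

lemma SparseBound.compl_sum (hG : SparseBound Gᶜ k f) (hH : SparseBound Hᶜ k g) {h : ℕ → ℕ}
    (hf : ∀ c ≤ k, f c ≤ h c) (hg : ∀ c ≤ k, g c ≤ h c)
    (hmix : ∀ c ≤ k, ∀ x y, 0 < x → 0 < y → x ≤ c → y ≤ c → x ≤ f (c - y) → y ≤ g (c - x) →
      x + y ≤ h c) :
    SparseBound (G ⊕g H)ᶜ k h := by
  intro c hc S hS
  rw [← Set.ncard_preimage_inl_add_ncard_preimage_inr]
  set x := (Sum.inl ⁻¹' S).ncard
  set y := (Sum.inr ⁻¹' S).ncard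
  have hx : x ≤ f (c - y) := hG _ (by omega) _ fun a ha => by
    have := hS.ncard_add_ncard_le_of_inl ha
    omega
  have hy : y ≤ g (c - x) := hH _ (by omega) _ fun b hb => by
    have := hS.ncard_add_ncard_le_of_inr hb
    omega
  obtain hx0 | hx0 := Nat.eq_zero_or_pos x
  · rw [hx0, Nat.sub_zero] at hy
    have := hg c hc
    omega
  obtain hy0 | hy0 := Nat.eq_zero_or_pos y
  · rw [hy0, Nat.sub_zero] at hx
    have := hf c hc
    omega
  obtain ⟨a, ha⟩ := (Set.ncard_pos (Set.toFinite _)).1 hx0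
  obtain ⟨b, hb⟩ := (Set.ncard_pos (Set.toFinite _)).1 hy0
  have := hS.ncard_add_ncard_le_of_inl ha
  have := hS.ncard_add_ncard_le_of_inr hb
  exact hmix c hc x y hx0 hy0 (by omega) (by omega) hx hy

lemma SparseBound.compl_sum_linear {m : ℕ} (hG : SparseBound Gᶜ k fun c => m + c + 1)
    (hH : SparseBound Hᶜ k fun c => m + c + 1) : SparseBound (G ⊕g H)ᶜ k fun c => m + c + 1 :=
  hG.compl_sum hH (fun _ _ => le_rfl) (fun _ _ => le_rfl) fun _ _ _ _ _ _ _ _ _ _ => by omega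

lemma SparseBound.compl_sum_const {Γ γ : ℕ} (hG : SparseBound Gᶜ k fun _ => Γ)
    (hH : SparseBound Hᶜ k fun c => γ + c + 1) (hγ : γ + k + 1 ≤ Γ) :
    SparseBound (G ⊕g H)ᶜ k fun _ => Γ :=
  hG.compl_sum hH (fun _ _ => le_rfl) (fun _ _ => by omega) fun _ _ _ _ _ _ _ _ _ _ => by omega

end SparseBound

section IterSum

universe u

def IterSum (α β : Type u) : ℕ → Type u
  | 0 => α
  | t + 1 => IterSum α β t ⊕ β

variable {α β : Type u}

instance IterSum.instFinite [Finite α] [Finite β] : ∀ t, Finite (IterSum α β t)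
  | 0 => ‹Finite α›
  | t + 1 => have := IterSum.instFinite t; inferInstanceAs (Finite (IterSum α β t ⊕ β))

lemma IterSum.card [Finite α] [Finite β] :
    ∀ t, Nat.card (IterSum α β t) = Nat.card α + t * Nat.card β
  | 0 => by simp [IterSum]
  | t + 1 => by
    rw [show IterSum α β (t + 1) = (IterSum α β t ⊕ β) from rfl, Nat.card_sum, IterSum.card t]
    ring

def SimpleGraph.sumIter (G : SimpleGraph α) (H : SimpleGraph β) :
    (t : ℕ) → SimpleGraph (IterSum α β t)
  | 0 => G
  | t + 1 => G.sumIter H t ⊕g H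

variable {G : SimpleGraph α} {H : SimpleGraph β}

lemma IsCograph.sumIter (hG : IsCograph G) (hH : IsCograph H) : ∀ t, IsCograph (G.sumIter H t)
  | 0 => hG
  | t + 1 => (hG.sumIter hH t).sum hH

variable [Finite α] [Finite β] {k : ℕ}

lemma SparseBound.sumIter {f g : ℕ → ℕ} (hG : SparseBound G k f) (hH : SparseBound H k g) :
    ∀ t, SparseBound (G.sumIter H t) k fun c => f c + t * g c
  | 0 => hG.mono fun c _ => by simp
  | t + 1 => ((hG.sumIter hH t).sum hH).mono fun c _ => le_of_eq (by ring)

lemma SparseBound.compl_sumIter_linear {m : ℕ} (hG : SparseBound Gᶜ k fun c => m + c + 1)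
    (hH : SparseBound Hᶜ k fun c => m + c + 1) :
    ∀ t, SparseBound (G.sumIter H t)ᶜ k fun c => m + c + 1
  | 0 => hG
  | t + 1 => (hG.compl_sumIter_linear hH t).compl_sum_linear hH

lemma SparseBound.compl_sumIter_const {Γ γ : ℕ} (hG : SparseBound Gᶜ k fun _ => Γ)
    (hH : SparseBound Hᶜ k fun c => γ + c + 1) (hγ : γ + k + 1 ≤ Γ) :
    ∀ t, SparseBound (G.sumIter H t)ᶜ k fun _ => Γ
  | 0 => hG
  | t + 1 => (hG.compl_sumIter_const hH hγ t).compl_sum_const hH hγ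

end IterSum

section LowerBound

lemma sparseBound_top_sum_bot (k q : ℕ) :
    SparseBound ((⊤ : SimpleGraph (Fin (k + 1))) ⊕g (⊥ : SimpleGraph (Fin q))) k
      fun c => q + c + 1 :=
  ((sparseBound_top k).sum (sparseBound_card _ k)).mono fun c _ => by simp; omega

lemma sparseBound_compl_top_sum_bot (k q : ℕ) :
    SparseBound ((⊤ : SimpleGraph (Fin (k + 1))) ⊕g (⊥ : SimpleGraph (Fin q)))ᶜ k
      fun _ => k + 1 := by
  refine .compl_sum_const (γ := 0) ((sparseBound_card _ k).mono fun c _ => by simp) ?_ (by omega)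
  rw [compl_bot]
  exact (sparseBound_top k).mono fun c _ => by omega

/-- With `K q = K_{k+1} + I_q` (a clique and `q` isolated vertices) and `∨` the join, written as
the complement of the disjoint union of the complements, the graph is
`((K r)ᶜ + I_s) ∨ K s ∨ ⋯ ∨ K s` (`A` joins) plus `B` disjoint copies of `(K (A (k + 1) + r))ᶜ`. -/
lemma exists_cograph_sparseBound (k A r B s : ℕ) :
    ∃ (V : Type) (_ : Finite V) (G : SimpleGraph V),
      Nat.card V = (B + 1) * ((A + 1) * (k + 1) + r) + (A + 1) * s ∧ IsCograph G ∧
      SparseBound Gᶜ k (fun c => A * (k + 1) + r + c + 1) ∧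
      SparseBound G k (fun _ => (B + 1) * (k + 1) + s) := by
  let K (q : ℕ) : SimpleGraph (Fin (k + 1) ⊕ Fin q) := ⊤ ⊕g ⊥
  have hK (q : ℕ) : IsCograph (K q) := isCograph_top.sum isCograph_bot
  let base := (K r)ᶜ ⊕g (⊥ : SimpleGraph (Fin s))
  let inner := (baseᶜ.sumIter (K s)ᶜ A)ᶜ
  have base_dense : SparseBound baseᶜ k fun c => r + c + 1 := by
    refine SparseBound.compl_sum_linear ?_ ?_
    · rw [compl_compl]
      exact sparseBound_top_sum_bot k r
    · rw [compl_bot]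
      exact (sparseBound_top k).mono fun c _ => by omega
  have base_sparse : SparseBound base k fun _ => k + 1 + s :=
    ((sparseBound_compl_top_sum_bot k r).sum (sparseBound_card _ k)).mono fun c _ => by simp
  have inner_dense : SparseBound innerᶜ k fun c => A * (k + 1) + r + c + 1 := by
    rw [compl_compl]
    exact (base_dense.sumIter (sparseBound_compl_top_sum_bot k s) A).mono fun c _ => by omega
  have inner_sparse : SparseBound inner k fun _ => k + 1 + s := by
    refine SparseBound.compl_sumIter_const (γ := s) ?_ ?_ (by omega) A
    · rwa [compl_compl]
    · rw [compl_compl]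
      exact sparseBound_top_sum_bot k s
  refine ⟨_, inferInstance, inner.sumIter (K (A * (k + 1) + r))ᶜ B, ?_, ?_, ?_, ?_⟩
  · rw [IterSum.card, IterSum.card, Nat.card_sum, Nat.card_sum, Nat.card_sum, Nat.card_sum]
    simp only [Nat.card_eq_fintype_card, Fintype.card_fin]
    ring
  · exact (((hK r).compl.sum isCograph_bot).compl.sumIter (hK s).compl A).compl.sumIter
      (hK _).compl B
  · refine inner_dense.compl_sumIter_linear ?_ B
    rw [compl_compl]
    exact sparseBound_top_sum_bot k _
  · exact (inner_sparse.sumIter (sparseBound_compl_top_sum_bot k _) B).mono fun c _ => by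
      rw [add_mul, one_mul]
      omega

lemma exists_cograph_card_eq_extremalOrder {k i j : ℕ} (hi : k + 2 ≤ i) (hj : k + 2 ≤ j) :
    ∃ (V : Type) (_ : Finite V) (G : SimpleGraph V), Nat.card V = extremalOrder k i j ∧
      IsCograph G ∧ ¬ HasKDense G k i ∧ ¬ HasKSparse G k j := by
  obtain ⟨A, hA⟩ : ∃ A, (i - 1) / (k + 1) = A + 1 :=
    Nat.exists_eq_add_one.2 (Nat.div_pos (by omega) k.succ_pos)
  obtain ⟨B, hB⟩ : ∃ B, (j - 1) / (k + 1) = B + 1 :=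
    Nat.exists_eq_add_one.2 (Nat.div_pos (by omega) k.succ_pos)
  have hi' := Nat.div_add_mod (i - 1) (k + 1)
  have hj' := Nat.div_add_mod (j - 1) (k + 1)
  set r := (i - 1) % (k + 1)
  set s := (j - 1) % (k + 1)
  rw [hA] at hi'
  rw [hB] at hj'
  obtain ⟨V, _, G, hcard, hG, hdense, hsparse⟩ := exists_cograph_sparseBound k A r B s
  refine ⟨V, inferInstance, G, ?_, hG, fun ⟨S, hS, hSd⟩ => ?_, fun ⟨S, hS, hSs⟩ => ?_⟩
  · rw [hcard, extremalOrder_eq, hA, hB, ← hj']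
    ring
  · have : S.ncard ≤ A * (k + 1) + r + k + 1 := hdense k le_rfl S hSd
    have : (k + 1) * (A + 1) = A * (k + 1) + (k + 1) := by ring
    omega
  · have : S.ncard ≤ (B + 1) * (k + 1) + s := hsparse k le_rfl S hSs
    have : (k + 1) * (B + 1) = (B + 1) * (k + 1) := by ring
    omega

end LowerBound

theorem stmt19 (k i j : ℕ) (hi : k + 2 ≤ i) (hj : k + 2 ≤ j) :
    (∀ G : SimpleGraph
        (Fin (1 + ((i - 1) * (j - 1) - (i - 1) % (k + 1) * ((j - 1) % (k + 1))) / (k + 1))),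
        IsCograph G → HasKDense G k i ∨ HasKSparse G k j) ∧
    (∃ G : SimpleGraph
        (Fin (((i - 1) * (j - 1) - (i - 1) % (k + 1) * ((j - 1) % (k + 1))) / (k + 1))),
        IsCograph G ∧ ¬ HasKDense G k i ∧ ¬ HasKSparse G k j) := by
  refine ⟨fun G hG => hG.hasKDense_or_hasKSparse hi hj ?_, ?_⟩
  · rw [Nat.card_fin, extremalOrder]
    omega
  · obtain ⟨V, _, G, hcard, hG, hD, hS⟩ := exists_cograph_card_eq_extremalOrder hi hj
    let e := Iso.map (Finite.equivFinOfCardEq hcard) G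
    exact ⟨_, hG.anti e.symm.isIndContained, fun h => hD (h.map e.symm.toEmbedding),
      fun h => hS (h.map e.symm.toEmbedding)⟩
end
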